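/- Let (V, E, s, t) be a connected oriented multigraph with V and E finite and V nonempty, and let ∂ : ℝ^E → ℝ^V be its incidence map. Let L : E → ℝ satisfy L(e) > 0 for all e ∈ E, let y, z ∈ V, and let (γ_j)_{j ∈ J} be a basis of the cycle space ker ∂. If x ∈ ℝ^E satisfies ∂x = δ_y − δ_z and Σ_{e ∈ E} γ_j(e) · L(e) · x(e) = 0 for every j ∈ J, then |x(e)| ≤ 1 for every edge e ∈ E. -/

import Mathlib

/-- The incidence map `∂ : ℝ^E → ℝ^V` of an oriented multigraph `(V, E, s, t)`:
`(∂x)(v) = Σ_{e : t(e)=v} x(e) − Σ_{e : s(e)=v} x(e)`. -/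
noncomputable def incidenceMap {V E : Type*} [Fintype E] [DecidableEq V]
    (s t : E → V) : (E → ℝ) →ₗ[ℝ] (V → ℝ) where
  toFun x := fun v =>
    (∑ e ∈ Finset.univ.filter (fun e => t e = v), x e)
      - ∑ e ∈ Finset.univ.filter (fun e => s e = v), x e
  map_add' x y := by
    funext v
    simp [Finset.sum_add_distrib]
    ring
  map_smul' c x := by
    funext v
    simp [Finset.mul_sum, mul_sub]

/-- The simple graph underlying an oriented multigraph `(V, E, s, t)`: two distinct
vertices `v, w` are adjacent whenever some edge `e` satisfies `{s(e), t(e)} = {v, w}`. -/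
def underlyingGraph {V E : Type*} (s t : E → V) : SimpleGraph V where
  Adj v w := v ≠ w ∧ ∃ e, (s e = v ∧ t e = w) ∨ (s e = w ∧ t e = v)
  symm := by
    constructor
    rintro v w ⟨hne, e, he⟩
    exact ⟨hne.symm, e, he.symm⟩
  loopless := by
    constructor
    rintro v ⟨hne, -⟩
    exact hne rfl

/-!
Since `L · x` is orthogonal to the cycle space, it is a discrete gradient:
`L e * x e = f (t e) - f (s e)` for some potential `f` on the vertices. Fix an edge `e₀` with
`x e₀ > 0` and cut the graph along the superlevel set `S = {v | f (t e₀) ≤ f v}`. Positive current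
runs from lower to higher potential, so every edge entering `S` carries nonnegative current, every
edge leaving it nonpositive current, and `e₀` enters `S`. Hence `x e₀` is at most the net current
into `S`, which is `∑_{v ∈ S} (δ_y − δ_z)(v) ≤ 1`. Reversing all edges gives `-x e₀ ≤ 1`.
-/

section IncidenceMap

variable {V E : Type*} [Fintype E] [DecidableEq V] (s t : E → V)

lemma incidenceMap_apply (x : E → ℝ) (v : V) :
    incidenceMap s t x v = ∑ e with t e = v, x e - ∑ e with s e = v, x e := rfl

lemma incidenceMap_single [DecidableEq E] (e : E) :
    incidenceMap s t (Pi.single e 1) = Pi.single (t e) 1 - Pi.single (s e) 1 := by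
  ext v
  simp [incidenceMap_apply, Pi.single_apply, eq_comm]

lemma exists_potential_of_ker_le [DecidableEq E] (Φ : Module.Dual ℝ (E → ℝ))
    (hΦ : LinearMap.ker (incidenceMap s t) ≤ LinearMap.ker Φ) :
    ∃ f : V → ℝ, ∀ e, Φ (Pi.single e 1) = f (t e) - f (s e) := by
  have hmem : Φ ∈ LinearMap.range (incidenceMap s t).dualMap := by
    rw [LinearMap.range_dualMap_eq_dualAnnihilator_ker, Submodule.mem_dualAnnihilator]
    exact fun u hu => hΦ hu
  obtain ⟨ψ, rfl⟩ := hmem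
  refine ⟨fun v => ψ (Pi.single v 1), fun e => ?_⟩
  simp [LinearMap.dualMap_apply, incidenceMap_single]

lemma sum_incidenceMap_eq_sub (x : E → ℝ) (S : Finset V) :
    ∑ v ∈ S, incidenceMap s t x v
      = ∑ e with t e ∈ S ∧ s e ∉ S, x e - ∑ e with s e ∈ S ∧ t e ∉ S, x e := by
  have filter_split : ∀ p q : E → Prop, [DecidablePred p] → [DecidablePred q] →
      ∑ e with p e, x e = ∑ e with p e ∧ q e, x e + ∑ e with p e ∧ ¬ q e, x e := by
    intro p q _ _
    rw [← Finset.sum_filter_add_sum_filter_not _ q, Finset.filter_filter, Finset.filter_filter]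
  simp only [incidenceMap_apply, Finset.sum_sub_distrib,
    Finset.sum_fiberwise_eq_sum_filter Finset.univ S t x,
    Finset.sum_fiberwise_eq_sum_filter Finset.univ S s x]
  rw [filter_split (t · ∈ S) (s · ∈ S), filter_split (s · ∈ S) (t · ∈ S)]
  simp only [and_comm (a := s _ ∈ S)]
  ring

lemma incidenceMap_swap_neg (x : E → ℝ) : incidenceMap t s (-x) = incidenceMap s t x := by
  ext v
  simp only [incidenceMap_apply, Pi.neg_apply, Finset.sum_neg_distrib]
  ring

lemma sum_indicator_sub_indicator_le_one (S : Finset V) (y z : V) :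
    ∑ v ∈ S, ((if v = y then (1 : ℝ) else 0) - (if v = z then (1 : ℝ) else 0)) ≤ 1 := by
  rw [Finset.sum_sub_distrib, Finset.sum_ite_eq' S y, Finset.sum_ite_eq' S z]
  split_ifs <;> norm_num

variable [Fintype V] {s t} {L : E → ℝ} {x : E → ℝ} {y z : V} {f : V → ℝ}

lemma le_one_of_mul_eq_potential_sub (hL : ∀ e, 0 < L e)
    (hx : incidenceMap s t x
      = fun v => (if v = y then (1 : ℝ) else 0) - (if v = z then (1 : ℝ) else 0))
    (hf : ∀ e, L e * x e = f (t e) - f (s e)) (e₀ : E) : x e₀ ≤ 1 := by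
  rcases le_or_gt (x e₀) 0 with hneg | hpos
  · linarith
  have pos_iff : ∀ e, 0 < x e ↔ f (s e) < f (t e) := fun e => by
    rw [← sub_pos (b := f (s e)), ← hf e, mul_pos_iff_of_pos_left (hL e)]
  set S : Finset V := {v | f (t e₀) ≤ f v}
  have hin : ∀ e ∈ ({e | t e ∈ S ∧ s e ∉ S} : Finset E), 0 ≤ x e := by
    intro e he
    simp only [S, Finset.mem_filter, Finset.mem_univ, true_and, not_le] at he
    exact ((pos_iff e).mpr (he.2.trans_le he.1)).le
  have hout : ∀ e ∈ ({e | s e ∈ S ∧ t e ∉ S} : Finset E), x e ≤ 0 := by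
    intro e he
    simp only [S, Finset.mem_filter, Finset.mem_univ, true_and, not_le] at he
    exact not_lt.mp fun h => ((pos_iff e).mp h).not_ge (he.2.le.trans he.1)
  have he₀ : e₀ ∈ ({e | t e ∈ S ∧ s e ∉ S} : Finset E) := by
    simpa [S] using (pos_iff e₀).mp hpos
  calc x e₀ ≤ ∑ e with t e ∈ S ∧ s e ∉ S, x e := Finset.single_le_sum hin he₀
    _ ≤ ∑ e with t e ∈ S ∧ s e ∉ S, x e - ∑ e with s e ∈ S ∧ t e ∉ S, x e :=
      le_sub_self_iff _ |>.mpr (Finset.sum_nonpos hout)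
    _ = ∑ v ∈ S, incidenceMap s t x v := (sum_incidenceMap_eq_sub s t x S).symm
    _ ≤ 1 := hx ▸ sum_indicator_sub_indicator_le_one S y z

lemma abs_le_one_of_mul_eq_potential_sub (hL : ∀ e, 0 < L e)
    (hx : incidenceMap s t x
      = fun v => (if v = y then (1 : ℝ) else 0) - (if v = z then (1 : ℝ) else 0))
    (hf : ∀ e, L e * x e = f (t e) - f (s e)) (e : E) : |x e| ≤ 1 := by
  have hx' : incidenceMap t s (-x) = _ := (incidenceMap_swap_neg s t x).trans hx
  have hf' : ∀ e, L e * (-x) e = f (s e) - f (t e) := fun e => by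
    rw [Pi.neg_apply, mul_neg, hf e, neg_sub]
  exact abs_le.mpr ⟨neg_le.mp (le_one_of_mul_eq_potential_sub hL hx' hf' e),
    le_one_of_mul_eq_potential_sub hL hx hf e⟩

end IncidenceMap

theorem current_flow_slope_bound_general {V E : Type*} [Fintype V] [Fintype E]
    [DecidableEq V]
    (s t : E → V)
    (L : E → ℝ) (hL : ∀ e, 0 < L e)
    (y z : V) {J : Type*} (γ : J → (E → ℝ))
    (hspan : Submodule.span ℝ (Set.range γ) = LinearMap.ker (incidenceMap s t)) :
    ∀ x : E → ℝ,
      incidenceMap s t x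
          = (fun v => (if v = y then (1 : ℝ) else 0) - (if v = z then (1 : ℝ) else 0)) →
      (∀ j, ∑ e, γ j e * L e * x e = 0) →
      ∀ e, |x e| ≤ 1 := by
  classical
  intro x hx hcycle
  let Φ : Module.Dual ℝ (E → ℝ) := Fintype.linearCombination ℝ fun e => L e * x e
  have hΦ : LinearMap.ker (incidenceMap s t) ≤ LinearMap.ker Φ := by
    rw [← hspan, Submodule.span_le]
    rintro _ ⟨j, rfl⟩
    simpa [Φ, Fintype.linearCombination_apply, mul_assoc] using hcycle j
  obtain ⟨f, hf⟩ := exists_potential_of_ker_le s t Φ hΦ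
  exact abs_le_one_of_mul_eq_potential_sub hL hx fun e => by simpa [Φ] using hf e

/-- **Slopes of the voltage function are bounded by 1.**
Let `(V, E, s, t)` be a connected finite oriented multigraph, `L : E → ℝ` positive
edge lengths, `y, z ∈ V`, and `(γ_j)` a basis of the cycle space `ker ∂`. If `x ∈ ℝ^E`
satisfies `∂x = δ_y − δ_z` and `Σ_e γ_j(e) L(e) x(e) = 0` for all `j`, then
`|x(e)| ≤ 1` for every edge `e`. -/
theorem current_flow_slope_bound {V E : Type*} [Fintype V] [Fintype E]
    [DecidableEq V] [Nonempty V]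
    (s t : E → V) (hconn : (underlyingGraph s t).Connected)
    (L : E → ℝ) (hL : ∀ e, 0 < L e)
    (y z : V) {J : Type*} (γ : J → (E → ℝ))
    (hker : ∀ j, incidenceMap s t (γ j) = 0)
    (hli : LinearIndependent ℝ γ)
    (hspan : Submodule.span ℝ (Set.range γ) = LinearMap.ker (incidenceMap s t)) :
    ∀ x : E → ℝ,
      incidenceMap s t x
          = (fun v => (if v = y then (1 : ℝ) else 0) - (if v = z then (1 : ℝ) else 0)) →
      (∀ j, ∑ e, γ j e * L e * x e = 0) →
      ∀ e, |x e| ≤ 1 :=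
  current_flow_slope_bound_general s t L hL y z γ hspan
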